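/- arXiv:1901.08376 — 3 statements merged into one kernel-verified Lean document; each statement's English description precedes it below -/
import Mathlib

section
/- The geometric and algebraic multiplicities of the eigenvalue 1 of P coincide and both equal |∂X|. -/
open Matrix Module

/-- Maximum principle: the interior block has no eigenvector with eigenvalue 1. -/
lemma aux_no_eigen_one
    {I B : Type*} [Fintype I] [Fintype B] [DecidableEq I] [DecidableEq B]
    (P : Matrix (I ⊕ B) (I ⊕ B) ℝ)
    (hnonneg : ∀ x y, 0 ≤ P x y)
    (hrow : ∀ x, ∑ y, P x y = 1)
    (habs : ∀ (w : B) (x : I ⊕ B), P (Sum.inr w) x = if x = Sum.inr w then 1 else 0)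
    (hreach : ∀ x : I, ∃ (n : ℕ) (w : B), 0 < (P ^ n) (Sum.inl x) (Sum.inr w))
    (v : I → ℂ) (hv : ((P.map Complex.ofReal).toBlocks₁₁) *ᵥ v = v) : v = 0 := by
  by_contra hv0
  obtain ⟨x₀, hx₀ne⟩ : ∃ x, v x ≠ 0 := by
    by_contra h; push_neg at h; exact hv0 (funext h)
  obtain ⟨xm, -, hxm⟩ :=
    Finset.exists_max_image Finset.univ (fun x => ‖v x‖) ⟨x₀, Finset.mem_univ x₀⟩
  set M := ‖v xm‖ with hMdef
  have hM : ∀ x, ‖v x‖ ≤ M := fun x => hxm x (Finset.mem_univ x)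
  have hMpos : 0 < M := lt_of_lt_of_le (by simpa using hx₀ne) (hM x₀)
  -- key dichotomy at maximizers
  have key : ∀ x, ‖v x‖ = M →
      (∀ w, P (Sum.inl x) (Sum.inr w) = 0) ∧
      (∀ y, P (Sum.inl x) (Sum.inl y) ≠ 0 → ‖v y‖ = M) := by
    intro x hx
    have hvx : v x = ∑ y, ((P (Sum.inl x) (Sum.inl y) : ℂ) * v y) := by
      have := congrFun hv x
      simpa [Matrix.mulVec, dotProduct, Matrix.toBlocks₁₁] using this.symm
    have h1 : M ≤ ∑ y, P (Sum.inl x) (Sum.inl y) * ‖v y‖ := by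
      calc M = ‖v x‖ := hx.symm
        _ = ‖∑ y, ((P (Sum.inl x) (Sum.inl y) : ℂ) * v y)‖ := by rw [← hvx]
        _ ≤ ∑ y, ‖(P (Sum.inl x) (Sum.inl y) : ℂ) * v y‖ :=
            norm_sum_le _ _
        _ = ∑ y, P (Sum.inl x) (Sum.inl y) * ‖v y‖ := by
            refine Finset.sum_congr rfl fun y _ => ?_
            rw [norm_mul, Complex.norm_real, Real.norm_eq_abs, abs_of_nonneg (hnonneg _ _)]
    have h2 : ∑ y, P (Sum.inl x) (Sum.inl y) * ‖v y‖
        ≤ (∑ y, P (Sum.inl x) (Sum.inl y)) * M := by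
      rw [Finset.sum_mul]
      exact Finset.sum_le_sum fun y _ =>
        mul_le_mul_of_nonneg_left (hM y) (hnonneg _ _)
    have hsplit : (∑ y, P (Sum.inl x) (Sum.inl y)) + (∑ w, P (Sum.inl x) (Sum.inr w)) = 1 := by
      have := hrow (Sum.inl x)
      rwa [Fintype.sum_sum_type] at this
    have h4 : (∑ y, P (Sum.inl x) (Sum.inl y)) ≤ 1 := by
      nlinarith [Finset.sum_nonneg fun w (_ : w ∈ Finset.univ) => hnonneg (Sum.inl x) (Sum.inr w)]
    have h5 : (∑ y, P (Sum.inl x) (Sum.inl y)) * M ≤ M := by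
      nlinarith
    have hsum1 : (∑ y, P (Sum.inl x) (Sum.inl y)) = 1 := by
      nlinarith
    constructor
    · intro w
      have hz : (∑ w, P (Sum.inl x) (Sum.inr w)) = 0 := by linarith
      have := (Finset.sum_eq_zero_iff_of_nonneg
        (fun w (_ : w ∈ Finset.univ) => hnonneg (Sum.inl x) (Sum.inr w))).mp hz
      exact this w (Finset.mem_univ w)
    · intro y hy
      have heq : ∑ y, P (Sum.inl x) (Sum.inl y) * (M - ‖v y‖) = 0 := by
        simp only [mul_sub]
        rw [Finset.sum_sub_distrib, ← Finset.sum_mul, hsum1, one_mul]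
        nlinarith
      have := (Finset.sum_eq_zero_iff_of_nonneg
        (fun y (_ : y ∈ Finset.univ) =>
          mul_nonneg (hnonneg (Sum.inl x) (Sum.inl y)) (by linarith [hM y]))).mp heq
      have hzy := this y (Finset.mem_univ y)
      have := mul_eq_zero.mp hzy
      rcases this with h | h
      · exact absurd h hy
      · linarith [hM y]
  -- by induction, maximizers never reach the boundary
  have claim : ∀ n x, ‖v x‖ = M → ∀ w, (P ^ n) (Sum.inl x) (Sum.inr w) = 0 := by
    intro n
    induction n with
    | zero => intro x _ w; simp [Matrix.one_apply]
    | succ n ih =>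
      intro x hx w
      rw [pow_succ', Matrix.mul_apply]
      apply Finset.sum_eq_zero
      rintro (y | u) -
      · by_cases hy : P (Sum.inl x) (Sum.inl y) = 0
        · rw [hy, zero_mul]
        · rw [ih y ((key x hx).2 y hy) w, mul_zero]
      · rw [(key x hx).1 u, zero_mul]
  obtain ⟨n, w, hw⟩ := hreach xm
  rw [claim n xm rfl w] at hw
  exact lt_irrefl 0 hw

/-- The geometric and algebraic multiplicities of the eigenvalue `1` of `P` coincide and
both equal `|∂X|`. -/
theorem multiplicities_of_eigenvalue_one
    {I B : Type*} [Fintype I] [Fintype B] [DecidableEq I] [DecidableEq B]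
    [Nonempty I] [Nonempty B]
    (P : Matrix (I ⊕ B) (I ⊕ B) ℝ)
    (hnonneg : ∀ x y, 0 ≤ P x y)
    (hrow : ∀ x, ∑ y, P x y = 1)
    (habs : ∀ (w : B) (x : I ⊕ B), P (Sum.inr w) x = if x = Sum.inr w then 1 else 0)
    (hreach : ∀ x : I, ∃ (n : ℕ) (w : B), 0 < (P ^ n) (Sum.inl x) (Sum.inr w)) :
    Module.finrank ℂ
        (Module.End.eigenspace (Matrix.toLin' (P.map Complex.ofReal)) 1) =
      Fintype.card B ∧
    ((P.map Complex.ofReal).charpoly).rootMultiplicity 1 = Fintype.card B := by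
  have noeig : ∀ v : I → ℂ, ((P.map Complex.ofReal).toBlocks₁₁) *ᵥ v = v → v = 0 :=
    fun v hv => aux_no_eigen_one P hnonneg hrow habs hreach v hv
  set Pc := P.map Complex.ofReal with hPc
  set Qc := Pc.toBlocks₁₁ with hQc
  set Rc := Pc.toBlocks₁₂ with hRc
  -- block decomposition
  have hblocks : Pc = fromBlocks Qc Rc 0 1 := by
    ext z z'
    rcases z with i | u <;> rcases z' with j | w <;>
      simp [hPc, hQc, hRc, Matrix.fromBlocks, Matrix.toBlocks₁₁, Matrix.toBlocks₁₂, Matrix.map_apply,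
        habs, Matrix.one_apply, eq_comm, apply_ite Complex.ofReal]
  -- 1 - Qc is invertible
  have hdet : (1 - Qc).det ≠ 0 := by
    intro h
    obtain ⟨v, hv0, hv⟩ := Matrix.exists_mulVec_eq_zero_iff.mpr h
    apply hv0
    apply noeig
    rw [Matrix.sub_mulVec, Matrix.one_mulVec, sub_eq_zero] at hv
    exact hv.symm
  have hunit : IsUnit (1 - Qc).det := isUnit_iff_ne_zero.mpr hdet
  set N := (1 - Qc)⁻¹ * Rc with hN
  have hNeq : (1 - Qc) * N = Rc := by
    rw [hN, ← Matrix.mul_assoc, Matrix.mul_nonsing_inv _ hunit, Matrix.one_mul]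
  constructor
  · -- geometric multiplicity
    set L : (B → ℂ) →ₗ[ℂ] ((I ⊕ B) → ℂ) :=
      { toFun := fun b => Sum.elim (N *ᵥ b) b
        map_add' := by
          intro b b'; funext z
          cases z <;> simp [Matrix.mulVec_add]
        map_smul' := by
          intro c b; funext z
          cases z <;> simp [Matrix.mulVec_smul] } with hL
    have hLinj : Function.Injective L := by
      intro b b' h
      funext u
      have := congrFun h (Sum.inr u)
      simpa [hL] using this
    have hrange : LinearMap.range L = Module.End.eigenspace (Matrix.toLin' Pc) 1 := by
      ext v
      rw [Module.End.mem_eigenspace_iff]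
      constructor
      · rintro ⟨b, rfl⟩
        rw [Matrix.toLin'_apply, one_smul]
        show Pc *ᵥ (Sum.elim (N *ᵥ b) b) = Sum.elim (N *ᵥ b) b
        rw [hblocks, Matrix.fromBlocks_mulVec]
        have h1 : (Sum.elim (N *ᵥ b) b) ∘ Sum.inl = N *ᵥ b := rfl
        have h2 : (Sum.elim (N *ᵥ b) b) ∘ Sum.inr = b := rfl
        rw [h1, h2, Matrix.zero_mulVec, Matrix.one_mulVec, zero_add]
        have hQN : Qc * N = N - Rc := by
          have h := hNeq
          rw [Matrix.sub_mul, Matrix.one_mul] at h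
          rw [← h, sub_sub_cancel]
        congr 1
        rw [Matrix.mulVec_mulVec, hQN, Matrix.sub_mulVec, sub_add_cancel]
      · intro hv
        rw [Matrix.toLin'_apply, one_smul] at hv
        refine ⟨v ∘ Sum.inr, ?_⟩
        have hv' := hv
        rw [hblocks, Matrix.fromBlocks_mulVec] at hv'
        have hinl : Qc *ᵥ (v ∘ Sum.inl) + Rc *ᵥ (v ∘ Sum.inr) = v ∘ Sum.inl := by
          funext i; exact congrFun hv' (Sum.inl i)
        have hIeq : v ∘ Sum.inl = N *ᵥ (v ∘ Sum.inr) := by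
          have hsub : (1 - Qc) *ᵥ (v ∘ Sum.inl) = Rc *ᵥ (v ∘ Sum.inr) := by
            rw [Matrix.sub_mulVec, Matrix.one_mulVec]
            have h := hinl
            rw [add_comm] at h
            exact sub_eq_of_eq_add h.symm
          have := congrArg (fun u => (1 - Qc)⁻¹ *ᵥ u) hsub
          simpa [Matrix.mulVec_mulVec, Matrix.nonsing_inv_mul _ hunit,
            Matrix.one_mulVec, hN] using this
        show Sum.elim (N *ᵥ (v ∘ Sum.inr)) (v ∘ Sum.inr) = v
        rw [← hIeq]
        exact Sum.elim_comp_inl_inr v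
    rw [← hrange, LinearMap.finrank_range_of_inj hLinj,
      Module.finrank_fintype_fun_eq_card]
  · -- algebraic multiplicity
    have hcp : Pc.charpoly = Qc.charpoly * (1 : Matrix B B ℂ).charpoly := by
      rw [hblocks, Matrix.charpoly_fromBlocks_zero₂₁]
    have hone : (1 : Matrix B B ℂ).charpoly =
        (Polynomial.X - Polynomial.C 1) ^ Fintype.card B := by
      have hc : charmatrix (1 : Matrix B B ℂ) =
          diagonal (fun _ => (Polynomial.X : Polynomial ℂ) - Polynomial.C 1) := by
        ext i j
        by_cases h : i = j
        · subst h; simp [charmatrix_apply_eq]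
        · simp [charmatrix_apply_ne _ _ _ h, Matrix.one_apply_ne h, Matrix.diagonal_apply_ne _ h]
      rw [Matrix.charpoly, hc, Matrix.det_diagonal, Finset.prod_const, Finset.card_univ]
    have heval : Qc.charpoly.eval 1 = (1 - Qc).det := by
      rw [Matrix.charpoly]
      have : (Polynomial.evalRingHom (1:ℂ)) (charmatrix Qc).det =
          ((Polynomial.evalRingHom (1:ℂ)).mapMatrix (charmatrix Qc)).det :=
        RingHom.map_det _ _
      rw [Polynomial.coe_evalRingHom] at this
      rw [this]
      congr 1
      ext i j
      by_cases h : i = j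
      · subst h
        simp [charmatrix_apply_eq, Matrix.one_apply]
      · simp [charmatrix_apply_ne _ _ _ h, Matrix.one_apply_ne h]
    have hQne : Qc.charpoly.rootMultiplicity 1 = 0 := by
      apply Polynomial.rootMultiplicity_eq_zero
      rw [Polynomial.IsRoot, heval]
      exact hdet
    rw [hcp, Polynomial.rootMultiplicity_mul, hQne, hone,
      Polynomial.rootMultiplicity_X_sub_C_pow, zero_add]
    rw [hone]
    exact mul_ne_zero (Matrix.charpoly_monic _).ne_zero
      (pow_ne_zero _ (Polynomial.X_sub_C_ne_zero 1))
end

section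
/- Riquier problem: for λ in the resolvent set of P_{X°} and boundary functions g_1,…,g_n: ∂X → ℂ, there exist unique functions f_n, f_{n−1}, …, f_1: X → ℂ with f_r = g_r on ∂X, (Δ_λ f_n)(x) = 0 for x ∈ X°, and (Δ_λ f_r)(x) = f_{r+1}(x) for x ∈ X° and r = n−1,…,1; the solution f = f_1 is given on X° by f(x) = Σ_{r=1}^n [G(λ)^r Q g_r](x), where G(λ) = (λ·I_{X°} − P_{X°})^{-1}. -/
/-!
On `X°` the equation `Δ_λ f = h` with boundary values `b` reads `(λI - P_{X°}) f = h + Q b`,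
so it has the unique solution `f = G(λ) (h + Q b)`. Solving the tower from `f_n` down to `f_1`
gives `f_r = G(λ) (f_{r+1} + Q g_r)` on `X°`, and unrolling this recursion yields
`f_r = Σ_{s ≥ r} G(λ)^{s-r+1} Q g_s`.
-/

open Matrix

/-- The conditions of the Riquier problem: `f 0, …, f (n-1)` play the roles of
`f_1, …, f_n`; each `f r` has boundary values `g r`, the last one is λ-harmonic on `X°`,
and `Δ_λ f_r = f_{r+1}` on `X°`. -/
def IsRiquierSolution {I B : Type*} [Fintype I] [Fintype B]
    (Δ : Matrix (I ⊕ B) (I ⊕ B) ℂ) (n : ℕ)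
    (g : Fin n → B → ℂ) (f : Fin n → (I ⊕ B) → ℂ) : Prop :=
  (∀ (r : Fin n) (w : B), f r (Sum.inr w) = g r w) ∧
  (∀ (hn : 0 < n) (x : I), (Δ.mulVec (f ⟨n - 1, by omega⟩)) (Sum.inl x) = 0) ∧
  (∀ (r : ℕ) (hr : r + 1 < n) (x : I),
    (Δ.mulVec (f ⟨r, by omega⟩)) (Sum.inl x) = f ⟨r + 1, hr⟩ (Sum.inl x))

namespace Riquier

variable {R I B : Type*} [CommRing R] [Fintype I] [Fintype B]

/-- `Δ_λ`, with `A = λI - P_{X°}`. -/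
def laplacian (A : Matrix I I R) (Q : Matrix I B R) : Matrix (I ⊕ B) (I ⊕ B) R :=
  fromBlocks A (-Q) 0 0

theorem laplacian_mulVec_inl (A : Matrix I I R) (Q : Matrix I B R) (v : I ⊕ B → R) (x : I) :
    (laplacian A Q *ᵥ v) (Sum.inl x) = (A *ᵥ (v ∘ Sum.inl) - Q *ᵥ (v ∘ Sum.inr)) x := by
  simp [laplacian, fromBlocks_mulVec, neg_mulVec, sub_eq_add_neg]

variable [DecidableEq I]

theorem mulVec_eq_iff_eq_inv_mulVec {A : Matrix I I R} (hA : IsUnit A) {u v : I → R} :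
    A *ᵥ u = v ↔ u = A⁻¹ *ᵥ v := by
  have hdet := (isUnit_iff_isUnit_det A).mp hA
  constructor
  · rintro rfl
    rw [mulVec_mulVec, nonsing_inv_mul _ hdet, one_mulVec]
  · rintro rfl
    rw [mulVec_mulVec, mul_nonsing_inv _ hdet, one_mulVec]

theorem laplacian_mulVec_inl_eq_iff {A : Matrix I I R} (hA : IsUnit A) (Q : Matrix I B R)
    {v : I ⊕ B → R} {h : I → R} :
    (∀ x, (laplacian A Q *ᵥ v) (Sum.inl x) = h x) ↔
      v ∘ Sum.inl = A⁻¹ *ᵥ (h + Q *ᵥ (v ∘ Sum.inr)) := by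
  simp only [laplacian_mulVec_inl, ← mulVec_eq_iff_eq_inv_mulVec hA, ← funext_iff,
    sub_eq_iff_eq_add]

/-- The values `Σ_{s ≥ r} G^{s-r+1} Q g_s` of `f_r`, with `G = A⁻¹`; it vanishes for
`r ≥ n`, which lets the last equation `Δ_λ f_n = 0` be treated like the others. -/
noncomputable def interiorValue (A : Matrix I I R) (Q : Matrix I B R) {n : ℕ}
    (g : Fin n → B → R) (r : ℕ) : I → R :=
  ∑ s ∈ Finset.univ.filter (fun s : Fin n => r ≤ (s : ℕ)),
    (A⁻¹ ^ ((s : ℕ) - r + 1) * Q) *ᵥ g s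

theorem interiorValue_zero (A : Matrix I I R) (Q : Matrix I B R) {n : ℕ} (g : Fin n → B → R) :
    interiorValue A Q g 0 = ∑ s : Fin n, (A⁻¹ ^ ((s : ℕ) + 1) * Q) *ᵥ g s := by
  simp [interiorValue]

theorem interiorValue_of_le (A : Matrix I I R) (Q : Matrix I B R) {n : ℕ} (g : Fin n → B → R)
    {r : ℕ} (hr : n ≤ r) : interiorValue A Q g r = 0 := by
  refine Finset.sum_eq_zero fun s hs => absurd (Finset.mem_filter.mp hs).2 ?_
  omega

theorem interiorValue_eq_inv_mulVec_succ (A : Matrix I I R) (Q : Matrix I B R) {n : ℕ}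
    (g : Fin n → B → R) (r : Fin n) :
    interiorValue A Q g r = A⁻¹ *ᵥ (interiorValue A Q g (r + 1) + Q *ᵥ g r) := by
  have hsplit : Finset.univ.filter (fun s : Fin n => (r : ℕ) ≤ s) =
      insert r (Finset.univ.filter fun s : Fin n => (r : ℕ) + 1 ≤ s) := by
    ext s
    simp only [Finset.mem_filter, Finset.mem_univ, true_and, Finset.mem_insert, Fin.ext_iff]
    omega
  rw [interiorValue, hsplit, Finset.sum_insert (by simp), interiorValue, mulVec_add, mulVec_sum,
    add_comm]
  congr 1
  · refine Finset.sum_congr rfl fun s hs => ?_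
    have hrs : (s : ℕ) - r = (s : ℕ) - (r + 1) + 1 := by
      have := (Finset.mem_filter.mp hs).2
      omega
    rw [mulVec_mulVec, hrs, pow_succ' _ ((s : ℕ) - (r + 1) + 1), Matrix.mul_assoc]
  · rw [Nat.sub_self, zero_add, pow_one, mulVec_mulVec]

noncomputable def solution (A : Matrix I I R) (Q : Matrix I B R) {n : ℕ} (g : Fin n → B → R) :
    Fin n → I ⊕ B → R :=
  fun r => Sum.elim (interiorValue A Q g r) (g r)

section Complex

variable {A : Matrix I I ℂ}

theorem isRiquierSolution_solution (hA : IsUnit A) (Q : Matrix I B ℂ) {n : ℕ}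
    (g : Fin n → B → ℂ) : IsRiquierSolution (laplacian A Q) n g (solution A Q g) := by
  refine ⟨fun r w => rfl, fun hn => ?_, fun r hr => ?_⟩
  · rw [laplacian_mulVec_inl_eq_iff hA]
    have : interiorValue A Q g (n - 1) =
        A⁻¹ *ᵥ (interiorValue A Q g (n - 1 + 1) + Q *ᵥ g ⟨n - 1, by omega⟩) :=
      interiorValue_eq_inv_mulVec_succ A Q g ⟨n - 1, by omega⟩
    rw [Nat.sub_add_cancel hn, interiorValue_of_le A Q g le_rfl] at this
    exact this
  · rw [laplacian_mulVec_inl_eq_iff hA]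
    exact interiorValue_eq_inv_mulVec_succ A Q g ⟨r, by omega⟩

theorem eq_solution_of_isRiquierSolution (hA : IsUnit A) {Q : Matrix I B ℂ} {n : ℕ}
    {g : Fin n → B → ℂ} {f : Fin n → I ⊕ B → ℂ}
    (hf : IsRiquierSolution (laplacian A Q) n g f) : f = solution A Q g := by
  obtain ⟨hboundary, hlast, hnext⟩ := hf
  have hinterior : ∀ r (hr : r < n), f ⟨r, hr⟩ ∘ Sum.inl = interiorValue A Q g r := by
    intro r hr
    induction hr.le using Nat.decreasingInduction with
    | self => exact (lt_irrefl n hr).elim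
    | of_succ k hk ih =>
      have hΔ : ∀ x,
          (laplacian A Q *ᵥ f ⟨k, hk⟩) (Sum.inl x) = interiorValue A Q g (k + 1) x := by
        rcases (Nat.succ_le_of_lt hk).lt_or_eq with hk' | rfl
        · exact fun x => (hnext k hk' x).trans (congrFun (ih hk') x)
        · rw [interiorValue_of_le A Q g le_rfl]
          exact hlast k.succ_pos
      have hsolve := (laplacian_mulVec_inl_eq_iff hA Q).mp hΔ
      rw [show f ⟨k, hk⟩ ∘ Sum.inr = g ⟨k, hk⟩ from funext (hboundary _)] at hsolve
      exact hsolve.trans (interiorValue_eq_inv_mulVec_succ A Q g ⟨k, hk⟩).symm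
  funext r z
  cases z with
  | inl x => exact congrFun (hinterior r r.2) x
  | inr w => exact hboundary r w

end Complex

end Riquier

/-- Riquier problem: for `λ` in the resolvent set of `P_{X°}` and boundary functions
`g_1, …, g_n`, there is a unique tower of solutions `f_n, …, f_1`, and the solution
`f = f_1` is given on `X°` by `f(x) = Σ_{r=1}^n [G(λ)^r Q g_r](x)` with
`G(λ) = (λI_{X°} - P_{X°})⁻¹`. -/
theorem riquier_problem
    {I B : Type*} [Fintype I] [Fintype B] [DecidableEq I]
    (P : Matrix (I ⊕ B) (I ⊕ B) ℝ)
    (lam : ℂ)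
    (hres : IsUnit
      (lam • (1 : Matrix I I ℂ) - (P.submatrix Sum.inl Sum.inl).map Complex.ofReal))
    (n : ℕ) (hn : 1 ≤ n) (g : Fin n → B → ℂ) :
    (∃! f : Fin n → (I ⊕ B) → ℂ,
      IsRiquierSolution
        (Matrix.fromBlocks
          (lam • (1 : Matrix I I ℂ) - (P.submatrix Sum.inl Sum.inl).map Complex.ofReal)
          (-(P.submatrix Sum.inl Sum.inr).map Complex.ofReal)
          (0 : Matrix B I ℂ) (0 : Matrix B B ℂ)) n g f) ∧
    (∀ f : Fin n → (I ⊕ B) → ℂ,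
      IsRiquierSolution
        (Matrix.fromBlocks
          (lam • (1 : Matrix I I ℂ) - (P.submatrix Sum.inl Sum.inl).map Complex.ofReal)
          (-(P.submatrix Sum.inl Sum.inr).map Complex.ofReal)
          (0 : Matrix B I ℂ) (0 : Matrix B B ℂ)) n g f →
      ∀ x : I, f ⟨0, by omega⟩ (Sum.inl x) =
        ∑ r : Fin n,
          ((((lam • (1 : Matrix I I ℂ) -
              (P.submatrix Sum.inl Sum.inl).map Complex.ofReal)⁻¹) ^ (r.1 + 1) *
            (P.submatrix Sum.inl Sum.inr).map Complex.ofReal).mulVec (g r)) x) := by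
  have hsol := Riquier.isRiquierSolution_solution hres
    ((P.submatrix Sum.inl Sum.inr).map Complex.ofReal) g
  refine ⟨⟨_, hsol, fun f hf => Riquier.eq_solution_of_isRiquierSolution hres hf⟩,
    fun f hf x => ?_⟩
  rw [Riquier.eq_solution_of_isRiquierSolution hres hf]
  exact (congrFun (Riquier.interiorValue_zero _ _ g) x).trans (Finset.sum_apply x _ _)
end

section
/- For the forward-only chain on a finite rooted tree with λ ≠ 0, the Green function satisfies: G(x,y|λ) = λ^{−d(x,y)−1} · P(∂_y T)/P(∂_x T) if x lies on the geodesic from the root o to y, and G(x,y|λ) = 0 otherwise, where G(λ) = (λ·I_{X°} − P_{X°})^{-1} and d(x,y) = |y| − |x|. -/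
open Matrix

/-- Green function of the forward-only chain on a finite rooted tree with boundary-arc
weights `μ`: for `λ ≠ 0` and interior vertices `x, y`,
`G(x,y|λ) = λ^{-d(x,y)-1}·μ(∂_y T)/μ(∂_x T)` if `x` lies on the geodesic from the root to
`y` (with `d(x,y) = |y| - |x|`), and `G(x,y|λ) = 0` otherwise. -/
theorem forward_tree_green_function
    {I B : Type*} [Fintype I] [Fintype B] [DecidableEq I] [DecidableEq B]
    [Nonempty B]
    (parent : I ⊕ B → I ⊕ B) (o : I)
    (hroot : parent (Sum.inl o) = Sum.inl o)
    (hconn : ∀ v, ∃ k : ℕ, parent^[k] v = Sum.inl o)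
    (hleafNoChild : ∀ (w : B) (v : I ⊕ B), v ≠ Sum.inl o → parent v ≠ Sum.inr w)
    (depth : I ⊕ B → ℕ)
    (hdepthroot : depth (Sum.inl o) = 0)
    (hdepth : ∀ v, v ≠ Sum.inl o → depth v = depth (parent v) + 1)
    (μ : I ⊕ B → ℝ)
    (hμpos : ∀ v, 0 < μ v)
    (hμroot : μ (Sum.inl o) = 1)
    (hμsum : ∀ x : I,
      μ (Sum.inl x) = ∑ v, if parent v = Sum.inl x ∧ v ≠ Sum.inl o then μ v else 0)
    (P : Matrix (I ⊕ B) (I ⊕ B) ℝ)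
    (hP : ∀ (x : I) (y : I ⊕ B),
      P (Sum.inl x) y =
        if parent y = Sum.inl x ∧ y ≠ Sum.inl o then μ y / μ (Sum.inl x) else 0)
    (habs : ∀ (w : B) (v : I ⊕ B), P (Sum.inr w) v = if v = Sum.inr w then 1 else 0)
    (lam : ℂ) (hlam : lam ≠ 0) :
    ∀ x y : I,
      ((∃ k : ℕ, parent^[k] (Sum.inl y) = Sum.inl x) →
        ((lam • (1 : Matrix I I ℂ) -
            (P.submatrix Sum.inl Sum.inl).map Complex.ofReal)⁻¹) x y =
          (lam ^ (depth (Sum.inl y) - depth (Sum.inl x) + 1))⁻¹ *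
            ((μ (Sum.inl y) / μ (Sum.inl x) : ℝ) : ℂ)) ∧
      (¬ (∃ k : ℕ, parent^[k] (Sum.inl y) = Sum.inl x) →
        ((lam • (1 : Matrix I I ℂ) -
            (P.submatrix Sum.inl Sum.inl).map Complex.ofReal)⁻¹) x y = 0) := by
  classical
  -- basic iteration/depth facts
  have hfix : ∀ k, parent^[k] (Sum.inl o) = Sum.inl o := by
    intro k
    induction k with
    | zero => rfl
    | succ n ih => rw [Function.iterate_succ_apply', ih, hroot]
  have hpar_le : ∀ v, depth (parent v) ≤ depth v := by
    intro v
    by_cases hv : v = Sum.inl o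
    · rw [hv, hroot]
    · rw [hdepth v hv]; omega
  have hiter_le : ∀ (k : ℕ) (v), depth (parent^[k] v) ≤ depth v := by
    intro k
    induction k with
    | zero => intro v; exact le_rfl
    | succ n ih =>
      intro v
      rw [Function.iterate_succ_apply']
      exact (hpar_le _).trans (ih v)
  have heq_of_iter : ∀ (k : ℕ) (v w), parent^[k] v = w → depth w = depth v → w = v := by
    intro k v w hk hd
    by_cases hv : v = Sum.inl o
    · rw [hv, hfix] at hk; rw [← hk, hv]
    · cases k with
      | zero => exact hk.symm
      | succ n =>
        exfalso
        rw [Function.iterate_succ_apply] at hk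
        have h1 : depth (parent^[n] (parent v)) ≤ depth (parent v) := hiter_le n (parent v)
        rw [hk] at h1
        have h2 := hdepth v hv
        omega
  have huniq : ∀ (j k : ℕ) (v w₁ w₂), parent^[j] v = w₁ → parent^[k] v = w₂ →
      depth w₁ = depth w₂ → w₁ = w₂ := by
    intro j k v w₁ w₂ hj hk hd
    rcases le_total j k with h | h
    · have hkey : parent^[k - j] w₁ = w₂ := by
        rw [← hj, ← Function.iterate_add_apply, Nat.sub_add_cancel h, hk]
      exact (heq_of_iter _ _ _ hkey hd.symm).symm
    · have hkey : parent^[j - k] w₂ = w₁ := by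
        rw [← hk, ← Function.iterate_add_apply, Nat.sub_add_cancel h, hj]
      exact heq_of_iter _ _ _ hkey hd
  have hnoleaf : ∀ (k : ℕ) (z : I) (w : B), parent^[k] (Sum.inl z) ≠ Sum.inr w := by
    intro k
    induction k with
    | zero => intro z w h; simp at h
    | succ n ih =>
      intro z w h
      rw [Function.iterate_succ_apply'] at h
      have hv : parent^[n] (Sum.inl z) = Sum.inl o := by
        by_contra hne
        exact hleafNoChild w _ hne h
      rw [hv, hroot] at h
      simp at h
  -- from a strict ancestor, step down one level towards z
  have hstep : ∀ (x z : I), x ≠ z → (∃ k, parent^[k] (Sum.inl z) = Sum.inl x) →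
      ∃ y : I, parent (Sum.inl y) = Sum.inl x ∧ (Sum.inl y : I ⊕ B) ≠ Sum.inl o ∧
        ∃ k, parent^[k] (Sum.inl z) = Sum.inl y := by
    intro x z hxz hanc
    have hm := Nat.find_spec hanc
    set m := Nat.find hanc with hmdef
    have hm1 : 1 ≤ m := by
      rcases Nat.eq_zero_or_pos m with h0 | h1
      · exfalso
        rw [h0] at hm
        simp only [Function.iterate_zero, id_eq, Sum.inl.injEq] at hm
        exact hxz hm.symm
      · exact h1
    have hmsplit : parent (parent^[m - 1] (Sum.inl z)) = Sum.inl x := by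
      have hit := Function.iterate_succ_apply' parent (m - 1) (Sum.inl z)
      rw [Nat.succ_eq_add_one, Nat.sub_add_cancel hm1] at hit
      rw [← hit]
      exact hm
    have hmin : parent^[m - 1] (Sum.inl z) ≠ Sum.inl x :=
      Nat.find_min hanc (by omega)
    obtain ⟨y, hy⟩ : ∃ y : I, parent^[m - 1] (Sum.inl z) = Sum.inl y := by
      rcases hv : parent^[m - 1] (Sum.inl z) with y | w
      · exact ⟨y, rfl⟩
      · exact absurd hv (hnoleaf _ _ _)
    refine ⟨y, by rw [← hy]; exact hmsplit, ?_, ⟨m - 1, hy⟩⟩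
    intro ho
    rw [hy, ho] at hmsplit
    rw [hroot] at hmsplit
    apply hmin
    rw [hy, ho, ← hmsplit]
  -- the matrices
  set Q : Matrix I I ℂ := (P.submatrix Sum.inl Sum.inl).map Complex.ofReal with hQdef
  have hQxy : ∀ x y : I, Q x y =
      if parent (Sum.inl y) = Sum.inl x ∧ (Sum.inl y : I ⊕ B) ≠ Sum.inl o then
        ((μ (Sum.inl y) / μ (Sum.inl x) : ℝ) : ℂ) else 0 := by
    intro x y
    simp only [hQdef, Matrix.map_apply, Matrix.submatrix_apply, hP, apply_ite Complex.ofReal,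
      Complex.ofReal_zero]
  have hQdiag : ∀ x : I, Q x x = 0 := by
    intro x
    rw [hQxy]
    rw [if_neg]
    rintro ⟨hpar, ho⟩
    have := hdepth (Sum.inl x) ho
    rw [hpar] at this
    omega
  set G : Matrix I I ℂ := Matrix.of (fun x z =>
    if ∃ k : ℕ, parent^[k] (Sum.inl z) = Sum.inl x then
      (lam ^ (depth (Sum.inl z) - depth (Sum.inl x) + 1))⁻¹ *
        ((μ (Sum.inl z) / μ (Sum.inl x) : ℝ) : ℂ) else 0) with hGdef
  have hGapp : ∀ x z : I, G x z =
      if ∃ k : ℕ, parent^[k] (Sum.inl z) = Sum.inl x then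
        (lam ^ (depth (Sum.inl z) - depth (Sum.inl x) + 1))⁻¹ *
          ((μ (Sum.inl z) / μ (Sum.inl x) : ℝ) : ℂ) else 0 := by
    intro x z; rfl
  have hAentry : ∀ x y : I, (lam • (1 : Matrix I I ℂ) - Q) x y =
      lam * (if x = y then 1 else 0) - Q x y := by
    intro x y
    simp [Matrix.sub_apply, Matrix.one_apply, smul_eq_mul]
  -- key: (lam • 1 - Q) * G = 1
  have hAG : (lam • (1 : Matrix I I ℂ) - Q) * G = 1 := by
    ext x z
    rw [Matrix.mul_apply]
    by_cases hanc : ∃ k : ℕ, parent^[k] (Sum.inl z) = Sum.inl x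
    · by_cases hxz : x = z
      · subst hxz
        rw [Finset.sum_eq_single x]
        · have hGxx : G x x = lam⁻¹ := by
            rw [hGapp, if_pos ⟨0, rfl⟩, Nat.sub_self, zero_add, pow_one,
              div_self (ne_of_gt (hμpos _))]
            simp
          rw [hAentry, hQdiag, hGxx, if_pos rfl, Matrix.one_apply_eq]
          field_simp
          simp
        · intro y _ hyx
          rw [hAentry, if_neg (Ne.symm hyx), hQxy]
          by_cases hchild : parent (Sum.inl y) = Sum.inl x ∧ (Sum.inl y : I ⊕ B) ≠ Sum.inl o
          · have hGyX : G y x = 0 := by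
              rw [hGapp, if_neg]
              rintro ⟨k, hk⟩
              -- then y is an ancestor of x, but also a strict descendant
              have h1 : depth (Sum.inl y) ≤ depth (Sum.inl x) := by
                have := hiter_le k (Sum.inl x)
                rw [hk] at this; exact this
              have h2 := hdepth (Sum.inl y) hchild.2
              rw [hchild.1] at h2
              omega
            rw [hGyX, mul_zero]
          · rw [if_neg hchild]
            ring
        · intro h; exact absurd (Finset.mem_univ x) h
      · -- x strict ancestor of z
        obtain ⟨y₀, hy₀par, hy₀o, hy₀anc⟩ := hstep x z hxz hanc
        have hdy₀ : depth (Sum.inl y₀) = depth (Sum.inl x) + 1 := by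
          have := hdepth (Sum.inl y₀) hy₀o
          rw [hy₀par] at this; exact this
        have hxy₀ : x ≠ y₀ := by
          intro h; rw [h] at hdy₀; omega
        have hdz : depth (Sum.inl x) + 1 ≤ depth (Sum.inl z) := by
          obtain ⟨k, hk⟩ := hy₀anc
          have := hiter_le k (Sum.inl z)
          rw [hk] at this
          omega
        have hOut : ∀ y ∈ (Finset.univ : Finset I), y ∉ ({x, y₀} : Finset I) →
            (lam • (1 : Matrix I I ℂ) - Q) x y * G y z = 0 := by
          intro y _ hy
          simp only [Finset.mem_insert, Finset.mem_singleton, not_or] at hy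
          rw [hAentry, if_neg (fun h => hy.1 h.symm), hQxy]
          by_cases hchild : parent (Sum.inl y) = Sum.inl x ∧ (Sum.inl y : I ⊕ B) ≠ Sum.inl o
          · have hGyz : G y z = 0 := by
              rw [hGapp, if_neg]
              rintro ⟨k, hk⟩
              -- y and y₀ are both children of x and ancestors of z: equal depths
              have hdy : depth (Sum.inl y) = depth (Sum.inl x) + 1 := by
                have := hdepth (Sum.inl y) hchild.2
                rw [hchild.1] at this; exact this
              obtain ⟨k₀, hk₀⟩ := hy₀anc
              have := huniq k k₀ (Sum.inl z) (Sum.inl y) (Sum.inl y₀) hk hk₀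
                (by rw [hdy, hdy₀])
              exact hy.2 (Sum.inl.injEq .. ▸ this)
            rw [hGyz, mul_zero]
          · rw [if_neg hchild]; ring
        rw [← Finset.sum_subset (Finset.subset_univ ({x, y₀} : Finset I)) hOut,
          Finset.sum_pair hxy₀]
        have hGxz : G x z = (lam ^ (depth (Sum.inl z) - depth (Sum.inl x) + 1))⁻¹ *
            ((μ (Sum.inl z) / μ (Sum.inl x) : ℝ) : ℂ) := by
          rw [hGapp, if_pos hanc]
        have hGy₀z : G y₀ z = (lam ^ (depth (Sum.inl z) - depth (Sum.inl y₀) + 1))⁻¹ *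
            ((μ (Sum.inl z) / μ (Sum.inl y₀) : ℝ) : ℂ) := by
          rw [hGapp, if_pos hy₀anc]
        rw [hAentry, hAentry, if_pos rfl, if_neg hxy₀, hQdiag, hQxy,
          if_pos ⟨hy₀par, hy₀o⟩, hGxz, hGy₀z, Matrix.one_apply_ne hxz]
        set m := depth (Sum.inl z) - (depth (Sum.inl x) + 1) with hmdef
        have hm1 : depth (Sum.inl z) - depth (Sum.inl x) = m + 1 := by omega
        have hm2 : depth (Sum.inl z) - depth (Sum.inl y₀) = m := by omega
        rw [hm1, hm2]
        have hμx := ne_of_gt (hμpos (Sum.inl x))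
        have hμy₀ := ne_of_gt (hμpos (Sum.inl y₀))
        have hμc : (μ (Sum.inl y₀) / μ (Sum.inl x)) * (μ (Sum.inl z) / μ (Sum.inl y₀))
            = μ (Sum.inl z) / μ (Sum.inl x) := by
          field_simp
        have hcast : ((μ (Sum.inl y₀) / μ (Sum.inl x) : ℝ) : ℂ) *
            ((μ (Sum.inl z) / μ (Sum.inl y₀) : ℝ) : ℂ)
            = ((μ (Sum.inl z) / μ (Sum.inl x) : ℝ) : ℂ) := by
          rw [← Complex.ofReal_mul, hμc]
        have hpow : lam * (lam ^ (m + 1 + 1))⁻¹ = (lam ^ (m + 1))⁻¹ := by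
          rw [pow_succ, mul_inv]
          field_simp
        calc (lam * 1 - 0) * ((lam ^ (m + 1 + 1))⁻¹ *
              ((μ (Sum.inl z) / μ (Sum.inl x) : ℝ) : ℂ)) +
            (lam * 0 - ((μ (Sum.inl y₀) / μ (Sum.inl x) : ℝ) : ℂ)) *
              ((lam ^ (m + 1))⁻¹ * ((μ (Sum.inl z) / μ (Sum.inl y₀) : ℝ) : ℂ))
            = (lam * (lam ^ (m + 1 + 1))⁻¹) * ((μ (Sum.inl z) / μ (Sum.inl x) : ℝ) : ℂ)
              - (lam ^ (m + 1))⁻¹ * (((μ (Sum.inl y₀) / μ (Sum.inl x) : ℝ) : ℂ) *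
                ((μ (Sum.inl z) / μ (Sum.inl y₀) : ℝ) : ℂ)) := by ring
          _ = 0 := by rw [hpow, hcast]; ring
    · -- x is not an ancestor of z
      have hxz : x ≠ z := by
        intro h; exact hanc ⟨0, by simp [h]⟩
      rw [Matrix.one_apply_ne hxz]
      apply Finset.sum_eq_zero
      intro y _
      rw [hAentry]
      by_cases hyx : y = x
      · subst hyx
        have hGyz : G y z = 0 := by rw [hGapp, if_neg hanc]
        rw [hGyz, mul_zero]
      · rw [if_neg (fun h => hyx h.symm), hQxy]
        by_cases hchild : parent (Sum.inl y) = Sum.inl x ∧ (Sum.inl y : I ⊕ B) ≠ Sum.inl o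
        · have hGyz : G y z = 0 := by
            rw [hGapp, if_neg]
            rintro ⟨k, hk⟩
            exact hanc ⟨k + 1, by rw [Function.iterate_succ_apply', hk, hchild.1]⟩
          rw [hGyz, mul_zero]
        · rw [if_neg hchild]; ring
  have hinv : (lam • (1 : Matrix I I ℂ) - Q)⁻¹ = G := Matrix.inv_eq_right_inv hAG
  intro x y
  constructor
  · intro h
    rw [hinv, hGapp, if_pos h]
  · intro h
    rw [hinv, hGapp, if_neg h]
end
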